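/- Let G be a group acting on a type X, let n be a natural number, and let Δ be a subgroup of G × Σₙ. Suppose d : Fin s → Fin n selects exactly one representative from each orbit of the action of p(Δ) on Fin n (every orbit contains exactly one element of the image of d, and d is injective). Then there is a bijection between the product ∏_{j : Fin s} fixedPoints (π(Δ_{d j})) X (the product over j of the sets of points of X fixed by the subgroup π(Δ_{d j}) of G) and the set fixedPoints Δ (Fin n → X) of Δ-fixed points of the (G × Σₙ)-action on Fin n → X. -/

import Mathlib

open MulAction

variable {G X : Type*} [Group G] [MulAction G X] {n : ℕ}

/-- The action of `G × Σₙ` on `Fin n → X` by `((g, σ) • f) i = g • f (σ⁻¹ i)`. -/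
instance prodPermMulAction : MulAction (G × Equiv.Perm (Fin n)) (Fin n → X) where
  smul := fun gs f i => gs.1 • f (gs.2⁻¹ i)
  one_smul f := by
    funext i
    show (1 : G) • f ((1 : Equiv.Perm (Fin n))⁻¹ i) = f i
    simp
  mul_smul a b f := by
    funext i
    show (a.1 * b.1) • f ((a.2 * b.2)⁻¹ i) = a.1 • b.1 • f (b.2⁻¹ (a.2⁻¹ i))
    rw [mul_smul, mul_inv_rev, Equiv.Perm.mul_apply]

/-- The stabilizer subgroup `Δᵢ = {δ ∈ Δ : p(δ) i = i}` of a subgroup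
`Δ ≤ G × Σₙ`. -/
def stab (Δ : Subgroup (G × Equiv.Perm (Fin n))) (i : Fin n) :
    Subgroup (G × Equiv.Perm (Fin n)) where
  carrier := {x | x ∈ Δ ∧ x.2 i = i}
  one_mem' := ⟨Δ.one_mem, rfl⟩
  mul_mem' := by
    rintro a b ⟨haΔ, ha⟩ ⟨hbΔ, hb⟩
    exact ⟨Δ.mul_mem haΔ hbΔ, by simp [Equiv.Perm.mul_apply, hb, ha]⟩
  inv_mem' := by
    rintro a ⟨haΔ, ha⟩
    exact ⟨Δ.inv_mem haΔ, by first | simp [Equiv.symm_apply_eq, ha] | (simp; exact a.2.symm_apply_eq.mpr ha.symm)⟩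

theorem fixedPoints_pi_equiv {s : ℕ} (Δ : Subgroup (G × Equiv.Perm (Fin n)))
    (d : Fin s → Fin n)
    (hd : ∀ i : Fin n, ∃! j : Fin s,
      d j ∈ MulAction.orbit (Δ.map (MonoidHom.snd G (Equiv.Perm (Fin n)))) i)
    (hinj : Function.Injective d) :
    Nonempty
      ((∀ j : Fin s,
          (fixedPoints ((stab Δ (d j)).map (MonoidHom.fst G (Equiv.Perm (Fin n)))) X)) ≃
        (fixedPoints Δ (Fin n → X))) := by
  classical
  set H := Δ.map (MonoidHom.snd G (Equiv.Perm (Fin n))) with hH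
  have hmemH : ∀ i i' : Fin n, i' ∈ orbit H i ↔ ∃ ε ∈ Δ, ε.2 i = i' := by
    intro i i'
    constructor
    · rintro ⟨⟨h, hh⟩, rfl⟩
      rw [hH, Subgroup.mem_map] at hh
      obtain ⟨ε, hε, rfl⟩ := hh
      exact ⟨ε, hε, rfl⟩
    · rintro ⟨ε, hε, rfl⟩
      exact ⟨⟨ε.2, Subgroup.mem_map.mpr ⟨ε, hε, rfl⟩⟩, rfl⟩
  set J : Fin n → Fin s := fun i => (hd i).choose with hJdef
  have hJ1 : ∀ i, d (J i) ∈ orbit H i := fun i => (hd i).choose_spec.1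
  have hJ2 : ∀ (i : Fin n) (j : Fin s), d j ∈ orbit H i → j = J i :=
    fun i j h => (hd i).choose_spec.2 j h
  choose δ hδΔ hδ2 using fun i => (hmemH i (d (J i))).mp (hJ1 i)
  have hJinv : ∀ c ∈ Δ, ∀ i : Fin n, J ((c : G × Equiv.Perm (Fin n)).2 i) = J i := by
    intro c hc i
    refine (hJ2 _ _ ?_).symm
    refine (hmemH _ _).mpr ⟨δ i * c⁻¹, Δ.mul_mem (hδΔ i) (Δ.inv_mem hc), ?_⟩
    show ((δ i).2 * c.2⁻¹) (c.2 i) = d (J i)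
    rw [Equiv.Perm.mul_apply, Equiv.Perm.inv_def, Equiv.symm_apply_apply, hδ2]
  have hfix : ∀ (j : Fin s) (x : X),
      x ∈ fixedPoints ((stab Δ (d j)).map (MonoidHom.fst G (Equiv.Perm (Fin n)))) X →
      ∀ ε ∈ Δ, ε.2 (d j) = d j → ε.1 • x = x := by
    intro j x hx ε hε hε2
    exact mem_fixedPoints.mp hx ⟨ε.1, Subgroup.mem_map.mpr ⟨ε, ⟨hε, hε2⟩, rfl⟩⟩
  refine ⟨{
    toFun := fun x => ⟨fun i => (δ i).1⁻¹ • (x (J i) : X), ?_⟩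
    invFun := fun f j => ⟨(f : Fin n → X) (d j), ?_⟩
    left_inv := ?_
    right_inv := ?_ }⟩
  · -- fixedness of the constructed function
    rw [mem_fixedPoints]
    intro m
    funext i
    set c := (m : G × Equiv.Perm (Fin n)) with hc
    show c.1 • ((δ (c.2⁻¹ i)).1⁻¹ • (x (J (c.2⁻¹ i)) : X)) = (δ i).1⁻¹ • (x (J i) : X)
    set i' := c.2⁻¹ i with hi'
    have hci' : c.2 i' = i := by simp [hi']
    have hJi : J i = J i' := by rw [← hci']; exact hJinv c m.2 i'
    have hε : ((δ i) * c * (δ i')⁻¹).1 • (x (J i') : X) = (x (J i') : X) := by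
      refine hfix (J i') _ (x (J i')).2 _
        (Δ.mul_mem (Δ.mul_mem (hδΔ i) m.2) (Δ.inv_mem (hδΔ i'))) ?_
      show ((δ i).2 * c.2 * (δ i').2⁻¹) (d (J i')) = d (J i')
      have hinvap : (δ i').2⁻¹ (d (J i')) = i' := by
        rw [← hδ2 i']; exact Equiv.symm_apply_apply _ _
      rw [Equiv.Perm.mul_apply, Equiv.Perm.mul_apply, hinvap, hci', hδ2 i, hJi]
    have hε' : (δ i).1 • c.1 • (δ i').1⁻¹ • (x (J i') : X) = (x (J i') : X) := by
      rw [← mul_smul, ← mul_smul]; exact hε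
    rw [hJi, eq_comm, inv_smul_eq_iff]
    exact hε'.symm
  · -- value at d j is fixed by π(Δ_{d j})
    rw [mem_fixedPoints]
    rintro ⟨g, hg⟩
    rw [Subgroup.mem_map] at hg
    obtain ⟨ε, ⟨hεΔ, hε2⟩, rfl⟩ := hg
    show ε.1 • (f : Fin n → X) (d j) = (f : Fin n → X) (d j)
    have hf := mem_fixedPoints.mp f.2 ⟨ε, hεΔ⟩
    have := congrFun hf (d j)
    calc ε.1 • (f : Fin n → X) (d j)
        = ε.1 • (f : Fin n → X) (ε.2⁻¹ (d j)) := by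
          rw [show ε.2⁻¹ (d j) = d j from by rw [Equiv.Perm.inv_eq_iff_eq, hε2]]
      _ = (f : Fin n → X) (d j) := this
  · -- left inverse
    intro x
    funext j
    apply Subtype.ext
    show (δ (d j)).1⁻¹ • (x (J (d j)) : X) = (x j : X)
    have hJd : J (d j) = j := (hJ2 (d j) j (mem_orbit_self _)).symm
    rw [hJd, inv_smul_eq_iff, eq_comm]
    refine hfix j _ (x j).2 _ (hδΔ (d j)) ?_
    rw [hδ2 (d j), hJd]
  · -- right inverse
    intro f
    apply Subtype.ext
    funext i
    show (δ i).1⁻¹ • (f : Fin n → X) (d (J i)) = (f : Fin n → X) i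
    have hf := mem_fixedPoints.mp f.2 ⟨δ i, hδΔ i⟩
    have := congrFun hf ((δ i).2 i)
    rw [← hδ2 i, inv_smul_eq_iff, eq_comm]
    calc (δ i).1 • (f : Fin n → X) i
        = (δ i).1 • (f : Fin n → X) ((δ i).2⁻¹ ((δ i).2 i)) := by
          rw [Equiv.Perm.inv_def, Equiv.symm_apply_apply]
      _ = (f : Fin n → X) ((δ i).2 i) := this
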